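/- arXiv:1312.0755 — 2 statements merged into one kernel-verified Lean document; each statement's English description precedes it below -/
import Mathlib

section
/- Let T ∈ (0,∞], u : [0,T] → [0,∞) integrable, and φ : [0,∞) → [0,∞) continuous with linear growth and φ(x) > 0 for x > 0. Then for each δ > 0 the equation y_t = δ + ∫ₜᵀ u(s) φ(y_s) ds has a unique bounded continuous solution, given explicitly by y_t = G⁻¹( G(δ) − ∫ₜᵀ u(s) ds ), where G(z) = ∫_z^1 dx/φ(x) for z ≥ δ. -/
open MeasureTheory Filter
open scoped ENNReal

/-- The interval `[0,T]` where `T ∈ (0,∞]` (i.e. `[0,∞)` if `T = ∞`). -/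
def dbInterval (T : ℝ≥0∞) : Set ℝ := {t : ℝ | 0 ≤ t ∧ ENNReal.ofReal t ≤ T}

/-- The tail interval `[t,T]`. -/
def dbTail (T : ℝ≥0∞) (t : ℝ) : Set ℝ := {s : ℝ | t ≤ s ∧ ENNReal.ofReal s ≤ T}

/-!
Write `G z = integralInv φ δ z = ∫_δ^z dx/φ x` (the paper's `G(δ) - G(z)`) and `U t = ∫_t^T u`. Everything rests on
the chain rule for the absolutely continuous tail `W s = ∫_s^∞ v` of a nonnegative integrable `v`:
`∫_t^∞ g(W s) v(s) ds = ∫_0^{W t} g`. Since `φ` grows at most linearly, `G` maps `[δ, ∞)` onto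
`[0, ∞)`; with `v = u` and `g = φ ∘ G⁻¹` the chain rule shows that `y = G⁻¹ ∘ U` solves the
equation. Conversely a bounded continuous solution `y` stays `≥ δ`, and then `v = u φ(y)` has
tail `y - δ`, so `g = 1 / φ(δ + ·)` gives `G(y t) = U t`; this forces uniqueness and the formula.
-/

open Set Topology

theorem LipschitzOnWith.comp_absolutelyContinuousOnInterval {X Y : Type*} [PseudoMetricSpace X]
    [PseudoMetricSpace Y] {f : ℝ → X} {g : X → Y} {K : NNReal} {s : Set X} {a b : ℝ}
    (hg : LipschitzOnWith K g s) (hf : AbsolutelyContinuousOnInterval f a b)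
    (hfs : MapsTo f (uIcc a b) s) : AbsolutelyContinuousOnInterval (g ∘ f) a b := by
  have hK : Tendsto (fun E : ℕ × (ℕ → ℝ × ℝ) ↦
      K * ∑ i ∈ Finset.range E.1, dist (f (E.2 i).1) (f (E.2 i).2))
      (AbsolutelyContinuousOnInterval.totalLengthFilter ⊓
        𝓟 (AbsolutelyContinuousOnInterval.disjWithin a b)) (𝓝 0) := by
    simpa using (tendsto_const_nhds (x := (K : ℝ))).mul hf
  refine squeeze_zero' (Eventually.of_forall fun E ↦ by positivity) ?_ hK
  filter_upwards [mem_inf_of_right (mem_principal_self _)] with E hE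
  rw [Finset.mul_sum]
  exact Finset.sum_le_sum fun i hi ↦
    hg.dist_le_mul _ (hfs (hE.1 i hi).1) _ (hfs (hE.1 i hi).2)

theorem intervalIntegral.integral_comp_primitive_mul {v g : ℝ → ℝ} {a b : ℝ}
    (hv : IntervalIntegrable v volume a b) (hg : Continuous g) :
    ∫ x in a..b, g (∫ t in a..x, v t) * v x = ∫ w in 0..∫ t in a..b, v t, g w := by
  -- `Γ ∘ V` is absolutely continuous with a.e. derivative `g (V x) * v x` (Lebesgue
  -- differentiation), so the fundamental theorem of calculus for such functions applies.
  set V : ℝ → ℝ := fun x ↦ ∫ t in a..x, v t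
  set Γ : ℝ → ℝ := fun w ↦ ∫ r in 0..w, g r
  have hΓ : ∀ w, HasDerivAt Γ (g w) w := fun w ↦ (hg.integral_hasStrictDerivAt 0 w).hasDerivAt
  have hV : AbsolutelyContinuousOnInterval V a b :=
    hv.absolutelyContinuousOnInterval_intervalIntegral left_mem_uIcc
  obtain ⟨C, hC⟩ := hV.exists_bound
  have hΓC : ContDiffOn ℝ 1 Γ (Icc (-C) C) :=
    (contDiff_one_iff_deriv.2 ⟨fun w ↦ (hΓ w).differentiableAt,
      by rwa [show deriv Γ = g from funext fun w ↦ (hΓ w).deriv]⟩).contDiffOn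
  obtain ⟨K, hK⟩ := hΓC.exists_lipschitzOnWith one_ne_zero (convex_Icc _ _) isCompact_Icc
  have hΓV : AbsolutelyContinuousOnInterval (Γ ∘ V) a b :=
    hK.comp_absolutelyContinuousOnInterval hV fun x hx ↦ abs_le.1 (hC x hx)
  have hderiv : ∀ᵐ x, x ∈ uIoc a b → deriv (Γ ∘ V) x = g (V x) * v x := by
    filter_upwards [hv.ae_hasDerivAt_integral] with x hx hxab
    exact ((hΓ (V x)).comp x (hx (uIoc_subset_uIcc hxab) a left_mem_uIcc)).deriv
  calc ∫ x in a..b, g (V x) * v x = ∫ x in a..b, deriv (Γ ∘ V) x :=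
        intervalIntegral.integral_congr_ae (hderiv.mono fun x hx hxab ↦ (hx hxab).symm)
    _ = Γ (V b) - Γ (V a) := hΓV.integral_deriv_eq_sub
    _ = Γ (V b) := by simp [V, Γ]

theorem MeasureTheory.Integrable.integral_Ioi_eq_sub {v : ℝ → ℝ} (hv : Integrable v) (a x : ℝ) :
    ∫ t in Ioi x, v t = (∫ t in Ioi a, v t) - ∫ t in a..x, v t := by
  rw [eq_sub_iff_add_eq']
  exact intervalIntegral.integral_interval_add_Ioi hv.integrableOn hv.integrableOn

theorem MeasureTheory.Integrable.continuous_integral_Ioi {v : ℝ → ℝ} (hv : Integrable v) :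
    Continuous fun x ↦ ∫ t in Ioi x, v t := by
  rw [funext (hv.integral_Ioi_eq_sub 0)]
  exact continuous_const.sub (hv.continuous_primitive 0)

theorem integral_Ioi_comp_integral_Ioi_mul {v g : ℝ → ℝ} (hv : Integrable v)
    (hv0 : ∀ x, 0 ≤ v x) (hg : ContinuousOn g (Ici 0)) (a : ℝ) :
    ∫ x in Ioi a, g (∫ t in Ioi x, v t) * v x = ∫ w in 0..∫ t in Ioi a, v t, g w := by
  set W : ℝ → ℝ := fun x ↦ ∫ t in Ioi x, v t
  set I := W a
  -- On `[a, R]` this is `integral_comp_primitive_mul` for `w ↦ g₀ (I - w)`, as `W = I - ∫_a^·`;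
  -- then let `R → ∞`. The extension `g₀` of `g` is continuous and agrees with it on `W`'s values.
  set g₀ : ℝ → ℝ := fun w ↦ g (max w 0)
  have hg₀ : Continuous g₀ :=
    hg.comp_continuous (continuous_id.max continuous_const) fun w ↦ le_max_right w 0
  have hW0 : ∀ x, 0 ≤ W x := fun x ↦ setIntegral_nonneg measurableSet_Ioi fun t _ ↦ hv0 t
  obtain ⟨K, hK⟩ := isCompact_Icc.exists_bound_of_continuousOn
    (hg₀.continuousOn (s := Icc 0 (∫ t, v t)))
  have hint : IntegrableOn (fun x ↦ g₀ (W x) * v x) (Ioi a) :=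
    hv.integrableOn.bdd_mul (hg₀.comp hv.continuous_integral_Ioi).aestronglyMeasurable
      (Eventually.of_forall fun x ↦
        hK _ ⟨hW0 x, setIntegral_le_integral hv (Eventually.of_forall hv0)⟩)
  have hlim : Tendsto (fun R ↦ ∫ x in a..R, g₀ (W x) * v x) atTop
      (𝓝 (∫ w in 0..I, g₀ (I - w))) := by
    have hg₁ : Continuous fun w ↦ g₀ (I - w) := hg₀.comp (continuous_sub_left I)
    have hcont : Continuous fun b ↦ ∫ w in 0..b, g₀ (I - w) :=
      intervalIntegral.continuous_primitive (fun _ _ ↦ hg₁.intervalIntegrable _ _) 0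
    refine ((hcont.tendsto I).comp
      (intervalIntegral_tendsto_integral_Ioi a hv.integrableOn tendsto_id)).congr fun R ↦ ?_
    have hW : ∀ x, W x = I - ∫ t in a..x, v t := hv.integral_Ioi_eq_sub a
    simp only [Function.comp_apply, id, hW]
    exact (intervalIntegral.integral_comp_primitive_mul hv.intervalIntegrable hg₁).symm
  calc ∫ x in Ioi a, g (W x) * v x = ∫ x in Ioi a, g₀ (W x) * v x := by
        simp only [g₀, max_eq_left (hW0 _)]
    _ = ∫ w in 0..I, g₀ (I - w) :=
        tendsto_nhds_unique (intervalIntegral_tendsto_integral_Ioi a hint tendsto_id) hlim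
    _ = ∫ w in 0..I, g w := by
        rw [intervalIntegral.integral_comp_sub_left, sub_self, sub_zero]
        refine intervalIntegral.integral_congr fun w hw ↦ ?_
        simp only [g₀, max_eq_left (uIcc_of_le (hW0 a) ▸ hw).1]

noncomputable def integralInv (φ : ℝ → ℝ) (δ z : ℝ) : ℝ := ∫ x in δ..z, (φ x)⁻¹

section integralInv

variable {φ : ℝ → ℝ} {δ : ℝ}

theorem intervalIntegrable_inv_of_pos (hφc : ContinuousOn φ (Ioi 0))
    (hφpos : ∀ x, 0 < x → 0 < φ x) {p q : ℝ} (hp : 0 < p) (hq : 0 < q) :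
    IntervalIntegrable (fun x ↦ (φ x)⁻¹) volume p q :=
  ((hφc.inv₀ fun x hx ↦ (hφpos x hx).ne').mono fun _ hx ↦
    (lt_min hp hq).trans_le hx.1).intervalIntegrable

theorem hasDerivAt_integralInv (hφc : ContinuousOn φ (Ioi 0)) (hφpos : ∀ x, 0 < x → 0 < φ x)
    (hδ : 0 < δ) {x : ℝ} (hx : 0 < x) : HasDerivAt (integralInv φ δ) (φ x)⁻¹ x :=
  have hinv := hφc.inv₀ fun x hx ↦ (hφpos x hx).ne'
  intervalIntegral.integral_hasDerivAt_right (intervalIntegrable_inv_of_pos hφc hφpos hδ hx)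
    (hinv.stronglyMeasurableAtFilter isOpen_Ioi x hx) (hinv.continuousAt (Ioi_mem_nhds hx))

theorem continuousOn_integralInv (hφc : ContinuousOn φ (Ioi 0))
    (hφpos : ∀ x, 0 < x → 0 < φ x) (hδ : 0 < δ) : ContinuousOn (integralInv φ δ) (Ioi 0) :=
  fun _ hx ↦ (hasDerivAt_integralInv hφc hφpos hδ hx).continuousAt.continuousWithinAt

theorem integralInv_strictMonoOn (hφc : ContinuousOn φ (Ioi 0))
    (hφpos : ∀ x, 0 < x → 0 < φ x) (hδ : 0 < δ) : StrictMonoOn (integralInv φ δ) (Ioi 0) :=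
  strictMonoOn_of_hasDerivWithinAt_pos (convex_Ioi 0) (continuousOn_integralInv hφc hφpos hδ)
    (fun _ hx ↦ (hasDerivAt_integralInv hφc hφpos hδ (interior_subset hx)).hasDerivWithinAt)
    fun x hx ↦ inv_pos.2 (hφpos x (interior_subset hx))

theorem integralInv_nonneg (hφpos : ∀ x, 0 < x → 0 < φ x) (hδ : 0 < δ) {z : ℝ} (hz : δ ≤ z) :
    0 ≤ integralInv φ δ z :=
  intervalIntegral.integral_nonneg hz fun x hx ↦ inv_nonneg.2 (hφpos x (hδ.trans_le hx.1)).le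

theorem tendsto_integralInv_atTop (hφc : ContinuousOn φ (Ioi 0))
    (hφpos : ∀ x, 0 < x → 0 < φ x) (hδ : 0 < δ) {c : ℝ} (hc : 0 < c)
    (hgrowth : ∀ x, δ ≤ x → φ x ≤ c * x) : Tendsto (integralInv φ δ) atTop atTop := by
  have hlog : Tendsto (fun z ↦ c⁻¹ * Real.log (z / δ)) atTop atTop :=
    (Real.tendsto_log_atTop.comp (tendsto_id.atTop_div_const hδ)).const_mul_atTop (inv_pos.2 hc)
  refine tendsto_atTop_mono' _ ?_ hlog
  filter_upwards [eventually_ge_atTop δ] with z hz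
  calc c⁻¹ * Real.log (z / δ) = ∫ x in δ..z, (c * x)⁻¹ := by
        simp only [mul_inv, intervalIntegral.integral_const_mul,
          integral_inv_of_pos hδ (hδ.trans_le hz)]
    _ ≤ integralInv φ δ z := by
        refine intervalIntegral.integral_mono_on hz ?_
          (intervalIntegrable_inv_of_pos hφc hφpos hδ (hδ.trans_le hz)) fun x hx ↦ ?_
        · exact (continuousOn_const.mul continuousOn_id).inv₀ (fun x hx ↦
            (mul_pos hc (hδ.trans_le hx.1)).ne') |>.intervalIntegrable_of_Icc hz
        · exact inv_anti₀ (hφpos x (hδ.trans_le hx.1)) (hgrowth x hx.1)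

theorem integralInv_image_Ici (hφc : ContinuousOn φ (Ioi 0)) (hφpos : ∀ x, 0 < x → 0 < φ x)
    (hδ : 0 < δ) {c : ℝ} (hc : 0 < c) (hgrowth : ∀ x, δ ≤ x → φ x ≤ c * x) :
    integralInv φ δ '' Ici δ = Ici 0 := by
  have hδδ : integralInv φ δ δ = 0 := intervalIntegral.integral_same
  refine Subset.antisymm ?_ ?_
  · rintro _ ⟨z, hz, rfl⟩
    exact integralInv_nonneg hφpos hδ hz
  · simpa [hδδ] using intermediate_value_Ici
      ((continuousOn_integralInv hφc hφpos hδ).mono fun _ hx ↦ hδ.trans_le hx)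
      (tendsto_integralInv_atTop hφc hφpos hδ hc hgrowth)

theorem exists_rightInverse_integralInv (hφc : ContinuousOn φ (Ioi 0))
    (hφpos : ∀ x, 0 < x → 0 < φ x) (hδ : 0 < δ) {c : ℝ} (hc : 0 < c)
    (hgrowth : ∀ x, δ ≤ x → φ x ≤ c * x) :
    ∃ H : ℝ → ℝ, ContinuousOn H (Ici 0) ∧ ∀ w, 0 ≤ w → δ ≤ H w ∧ integralInv φ δ (H w) = w := by
  let e : Ici δ ≃o Ici (0 : ℝ) :=
    (((integralInv_strictMonoOn hφc hφpos hδ).mono fun _ hx ↦ hδ.trans_le hx).orderIso _ _).trans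
      (OrderIso.setCongr _ _ (integralInv_image_Ici hφc hφpos hδ hc hgrowth))
  have hproj : Continuous (projIci (0 : ℝ)) := (continuous_const.max continuous_id).subtype_mk _
  refine ⟨fun w ↦ e.symm (projIci 0 w),
    (continuous_subtype_val.comp (e.symm.continuous.comp hproj)).continuousOn,
    fun w hw ↦ ⟨(e.symm _).2, ?_⟩⟩
  simp only [projIci_of_mem (mem_Ici.2 hw)]
  exact congrArg Subtype.val (e.apply_symm_apply ⟨w, hw⟩)

theorem integral_comp_rightInverse_integralInv (hφc : ContinuousOn φ (Ioi 0))
    (hφpos : ∀ x, 0 < x → 0 < φ x) (hδ : 0 < δ) {H : ℝ → ℝ} (hH : ContinuousOn H (Ici 0))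
    (hHG : ∀ w, 0 ≤ w → δ ≤ H w ∧ integralInv φ δ (H w) = w) {w : ℝ} (hw : 0 ≤ w) :
    ∫ r in 0..w, φ (H r) = H w - δ := by
  obtain ⟨hδH, hGH⟩ := hHG w hw
  have hGδ : integralInv φ δ δ = 0 := intervalIntegral.integral_same
  have hHG_left : ∀ x ∈ uIcc δ (H w), H (integralInv φ δ x) = x := fun x hx ↦ by
    rw [uIcc_of_le hδH] at hx
    have hGx := integralInv_nonneg hφpos hδ hx.1
    exact (integralInv_strictMonoOn hφc hφpos hδ).injOn (hδ.trans_le (hHG _ hGx).1)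
      (hδ.trans_le hx.1) (hHG _ hGx).2
  have hsubst := intervalIntegral.integral_comp_mul_deriv' (g := fun r ↦ φ (H r))
    (fun x hx ↦ hasDerivAt_integralInv hφc hφpos hδ (hδ.trans_le (uIcc_of_le hδH ▸ hx).1))
    ((hφc.inv₀ fun x hx ↦ (hφpos x hx).ne').mono fun x hx ↦ hδ.trans_le (uIcc_of_le hδH ▸ hx).1)
    ((hφc.comp hH fun r hr ↦ hδ.trans_le (hHG r hr).1).mono <| image_subset_iff.2 fun x hx ↦
      integralInv_nonneg hφpos hδ (uIcc_of_le hδH ▸ hx).1)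
  rw [hGδ, hGH] at hsubst
  rw [← hsubst, intervalIntegral.integral_congr (g := fun _ ↦ (1 : ℝ)) fun x hx ↦ ?_]
  · simp
  · simp only [Function.comp_apply, hHG_left x hx]
    exact mul_inv_cancel₀ (hφpos x (hδ.trans_le (uIcc_of_le hδH ▸ hx).1)).ne'

end integralInv

theorem nonneg_of_eq_add_integral_Ioi {S : Set ℝ} (hS : IsClosed S) {y k : ℝ → ℝ} {c : ℝ}
    (hc : 0 < c) (hy : ContinuousOn y S) (hk : ∀ s, (s ∈ S → 0 ≤ y s) → 0 ≤ k s)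
    (heq : ∀ t ∈ S, y t = c + ∫ s in Ioi t, k s) {t : ℝ} (ht : t ∈ S) : 0 ≤ y t := by
  by_contra! hyt
  -- As the tail of `k` tends to `0`, `N = {y ≤ 0}` has a largest point; beyond it `k ≥ 0`, so
  -- `y ≥ c` there.
  set N := S ∩ y ⁻¹' Iic 0
  obtain ⟨s₁, hs₁⟩ := ((tendsto_integral_Ioi_zero tendsto_id).eventually
    (Ioi_mem_nhds (neg_lt_zero.2 hc))).exists_forall_of_atTop
  have hbdd : BddAbove N := ⟨s₁, fun s hs ↦ by
    by_contra! h
    have htail : -c < ∫ r in Ioi s, k r := hs₁ s h.le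
    have hys : y s ≤ 0 := hs.2
    linarith [heq s hs.1]⟩
  have hsN : sSup N ∈ N :=
    (hy.preimage_isClosed_of_isClosed hS isClosed_Iic).csSup_mem ⟨t, ht, hyt.le⟩ hbdd
  have htail : 0 ≤ ∫ r in Ioi (sSup N), k r :=
    setIntegral_nonneg measurableSet_Ioi fun r hr ↦ hk r fun hrS ↦ by
      by_contra! h
      exact (le_csSup hbdd ⟨hrS, h.le⟩).not_gt hr
  have hys : y (sSup N) ≤ 0 := hsN.2
  linarith [heq _ hsN.1]

theorem isClosed_dbInterval (T : ℝ≥0∞) : IsClosed (dbInterval T) :=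
  isClosed_Ici.inter (isClosed_Iic.preimage ENNReal.continuous_ofReal)

theorem dbTail_eq_Ici_inter {T : ℝ≥0∞} {t : ℝ} (ht : 0 ≤ t) :
    dbTail T t = Ici t ∩ dbInterval T := by
  ext s
  exact ⟨fun hs ↦ ⟨hs.1, ht.trans hs.1, hs.2⟩, fun hs ↦ ⟨hs.1, hs.2.2⟩⟩

theorem setIntegral_dbTail {T : ℝ≥0∞} {t : ℝ} (ht : 0 ≤ t) (f : ℝ → ℝ) :
    ∫ s in dbTail T t, f s = ∫ s in Ioi t, (dbInterval T).indicator f s := by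
  rw [← integral_Ici_eq_integral_Ioi,
    setIntegral_indicator (isClosed_dbInterval T).measurableSet, dbTail_eq_Ici_inter ht]

def IsBoundedSolution (T : ℝ≥0∞) (u φ : ℝ → ℝ) (δ : ℝ) (y : ℝ → ℝ) : Prop :=
  ContinuousOn y (dbInterval T) ∧ (∃ M : ℝ, ∀ t ∈ dbInterval T, |y t| ≤ M) ∧
    ∀ t ∈ dbInterval T, y t = δ + ∫ s in dbTail T t, u s * φ (y s)

section boundedSolution

variable {T : ℝ≥0∞} {u φ : ℝ → ℝ} {δ : ℝ}

theorem exists_isBoundedSolution (hu0 : ∀ t ∈ dbInterval T, 0 ≤ u t)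
    (huInt : IntegrableOn u (dbInterval T)) (hφc : ContinuousOn φ (Ioi 0))
    (hφpos : ∀ x, 0 < x → 0 < φ x) (hδ : 0 < δ) {c : ℝ} (hc : 0 < c)
    (hgrowth : ∀ x, δ ≤ x → φ x ≤ c * x) : ∃ y, IsBoundedSolution T u φ δ y := by
  set ũ := (dbInterval T).indicator u
  have hũ : Integrable ũ := (integrable_indicator_iff (isClosed_dbInterval T).measurableSet).2 huInt
  have hũ0 : ∀ s, 0 ≤ ũ s := fun s ↦ indicator_nonneg hu0 s
  set U : ℝ → ℝ := fun t ↦ ∫ s in Ioi t, ũ s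
  have hU0 : ∀ t, 0 ≤ U t := fun t ↦ setIntegral_nonneg measurableSet_Ioi fun s _ ↦ hũ0 s
  have hUle : ∀ t, U t ≤ ∫ s, ũ s := fun t ↦
    setIntegral_le_integral hũ (Eventually.of_forall hũ0)
  obtain ⟨H, hH, hHG⟩ := exists_rightInverse_integralInv hφc hφpos hδ hc hgrowth
  obtain ⟨M, hM⟩ := isCompact_Icc.exists_bound_of_continuousOn
    (hH.mono (Icc_subset_Ici_self : Icc 0 (∫ s, ũ s) ⊆ Ici 0))
  have hφH : ContinuousOn (fun r ↦ φ (H r)) (Ici 0) :=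
    hφc.comp hH fun r hr ↦ hδ.trans_le (hHG r hr).1
  refine ⟨fun t ↦ H (U t), (hH.comp_continuous hũ.continuous_integral_Ioi hU0).continuousOn,
    ⟨M, fun t _ ↦ hM _ ⟨hU0 t, hUle t⟩⟩, fun t ht ↦ ?_⟩
  calc H (U t) = δ + ∫ r in 0..U t, φ (H r) := by
        rw [integral_comp_rightInverse_integralInv hφc hφpos hδ hH hHG (hU0 t)]; ring
    _ = δ + ∫ s in Ioi t, φ (H (U s)) * ũ s := by
        rw [integral_Ioi_comp_integral_Ioi_mul hũ hũ0 hφH t]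
    _ = δ + ∫ s in dbTail T t, u s * φ (H (U s)) := by
        simp only [setIntegral_dbTail ht.1, ũ, indicator_mul_left, mul_comm]

variable {y : ℝ → ℝ}

theorem IsBoundedSolution.le_apply (hy : IsBoundedSolution T u φ δ y)
    (hu0 : ∀ t ∈ dbInterval T, 0 ≤ u t) (hφ0 : ∀ x, 0 ≤ x → 0 ≤ φ x)
    (hδ : 0 < δ) {t : ℝ} (ht : t ∈ dbInterval T) : δ ≤ y t := by
  obtain ⟨hyc, -, heq⟩ := hy
  set k := (dbInterval T).indicator fun s ↦ u s * φ (y s)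
  have heq' : ∀ t ∈ dbInterval T, y t = δ + ∫ s in Ioi t, k s := fun t ht ↦ by
    rw [heq t ht, setIntegral_dbTail ht.1]
  have hk0 : ∀ s, (s ∈ dbInterval T → 0 ≤ y s) → 0 ≤ k s := fun s hs ↦
    indicator_apply_nonneg fun hsT ↦ mul_nonneg (hu0 s hsT) (hφ0 _ (hs hsT))
  have hy0 : ∀ s ∈ dbInterval T, 0 ≤ y s := fun s hs ↦
    nonneg_of_eq_add_integral_Ioi (isClosed_dbInterval T) hδ hyc hk0 heq' hs
  have htail : 0 ≤ ∫ s in Ioi t, k s :=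
    setIntegral_nonneg measurableSet_Ioi fun s _ ↦ hk0 s (hy0 s)
  linarith [heq' t ht]

theorem IsBoundedSolution.integrable_integrand (hy : IsBoundedSolution T u φ δ y)
    (hu0 : ∀ t ∈ dbInterval T, 0 ≤ u t)
    (huInt : IntegrableOn u (dbInterval T)) (hφc : ContinuousOn φ (Ioi 0))
    (hφ0 : ∀ x, 0 ≤ x → 0 ≤ φ x) {a b : ℝ} (ha : 0 ≤ a)
    (hφgrowth : ∀ x, 0 ≤ x → φ x ≤ a * x + b) (hδ : 0 < δ) :
    Integrable ((dbInterval T).indicator fun s ↦ u s * φ (y s)) := by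
  have hyδ := fun s (hs : s ∈ dbInterval T) ↦ hy.le_apply hu0 hφ0 hδ hs
  obtain ⟨hyc, ⟨M, hM⟩, -⟩ := hy
  have hS := (isClosed_dbInterval T).measurableSet
  have hφy : ContinuousOn (fun s ↦ φ (y s)) (dbInterval T) :=
    hφc.comp hyc fun s hs ↦ hδ.trans_le (hyδ s hs)
  have hbound : ∀ s ∈ dbInterval T, ‖φ (y s)‖ ≤ a * M + b := fun s hs ↦ by
    have hys : 0 ≤ y s := hδ.le.trans (hyδ s hs)
    rw [Real.norm_of_nonneg (hφ0 _ hys)]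
    exact (hφgrowth _ hys).trans (by gcongr; exact (le_abs_self _).trans (hM s hs))
  rw [integrable_indicator_iff hS, IntegrableOn]
  simpa only [mul_comm] using huInt.bdd_mul (hφy.aestronglyMeasurable hS)
    ((ae_restrict_iff' hS).2 (Eventually.of_forall hbound))

theorem IsBoundedSolution.integralInv_eq (hy : IsBoundedSolution T u φ δ y)
    (hu0 : ∀ t ∈ dbInterval T, 0 ≤ u t)
    (huInt : IntegrableOn u (dbInterval T)) (hφc : ContinuousOn φ (Ioi 0))
    (hφ0 : ∀ x, 0 ≤ x → 0 ≤ φ x) (hφpos : ∀ x, 0 < x → 0 < φ x) {a b : ℝ} (ha : 0 ≤ a)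
    (hφgrowth : ∀ x, 0 ≤ x → φ x ≤ a * x + b) (hδ : 0 < δ) {t : ℝ} (ht : t ∈ dbInterval T) :
    integralInv φ δ (y t) = ∫ s in dbTail T t, u s := by
  have hyδ := fun s (hs : s ∈ dbInterval T) ↦ hy.le_apply hu0 hφ0 hδ hs
  set k := (dbInterval T).indicator fun s ↦ u s * φ (y s)
  have hk0 : ∀ s, 0 ≤ k s :=
    indicator_nonneg fun s hs ↦ mul_nonneg (hu0 s hs) (hφ0 _ (hδ.le.trans (hyδ s hs)))
  have htail : ∀ s ∈ dbInterval T, ∫ r in Ioi s, k r = y s - δ := fun s hs ↦ by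
    rw [← setIntegral_dbTail hs.1, hy.2.2 s hs]; ring
  have hg : ContinuousOn (fun r ↦ (φ (δ + r))⁻¹) (Ici 0) :=
    (hφc.comp (continuousOn_const.add continuousOn_id) fun r (hr : 0 ≤ r) ↦ by
      simpa using hδ.trans_le (le_add_of_nonneg_right hr)).inv₀
      fun r (hr : 0 ≤ r) ↦ (hφpos _ (hδ.trans_le (le_add_of_nonneg_right hr))).ne'
  have hsubst := integral_Ioi_comp_integral_Ioi_mul
    (hy.integrable_integrand hu0 huInt hφc hφ0 ha hφgrowth hδ) hk0 hg t
  rw [htail t ht, intervalIntegral.integral_comp_add_left (fun x ↦ (φ x)⁻¹), add_zero,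
    add_sub_cancel] at hsubst
  rw [integralInv, ← hsubst, setIntegral_dbTail ht.1]
  refine setIntegral_congr_fun measurableSet_Ioi fun s _ ↦ ?_
  by_cases hs : s ∈ dbInterval T
  · simp only [k, indicator_of_mem hs, htail s hs, add_sub_cancel]
    field_simp [(hφpos _ (hδ.trans_le (hyδ s hs))).ne']
  · simp [indicator_of_notMem hs]

end boundedSolution

theorem stmt_9_general (T : ℝ≥0∞) (u : ℝ → ℝ) (φ : ℝ → ℝ) (a b : ℝ)
    (hu0 : ∀ t ∈ dbInterval T, 0 ≤ u t)
    (huInt : IntegrableOn u (dbInterval T))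
    (hφc : ContinuousOn φ (Set.Ici 0))
    (hφ0 : ∀ x : ℝ, 0 ≤ x → 0 ≤ φ x)
    (hφpos : ∀ x : ℝ, 0 < x → 0 < φ x)
    (ha : 0 ≤ a) (hb : 0 ≤ b)
    (hφgrowth : ∀ x : ℝ, 0 ≤ x → φ x ≤ a * x + b)
    (δ : ℝ) (hδ : 0 < δ) :
    ∃ y : ℝ → ℝ,
      (ContinuousOn y (dbInterval T) ∧ (∃ M : ℝ, ∀ t ∈ dbInterval T, |y t| ≤ M) ∧
        ∀ t ∈ dbInterval T, y t = δ + ∫ s in dbTail T t, u s * φ (y s)) ∧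
      (∀ y' : ℝ → ℝ,
        (ContinuousOn y' (dbInterval T) ∧ (∃ M : ℝ, ∀ t ∈ dbInterval T, |y' t| ≤ M) ∧
          ∀ t ∈ dbInterval T, y' t = δ + ∫ s in dbTail T t, u s * φ (y' s)) →
        ∀ t ∈ dbInterval T, y' t = y t) ∧
      -- explicit representation: y t = G⁻¹(G(δ) − ∫ₜᵀ u), with G(z) = ∫_z^1 dx/φ(x)
      ∀ t ∈ dbInterval T, δ ≤ y t ∧
        (∫ x in (y t)..1, (φ x)⁻¹) = (∫ x in δ..1, (φ x)⁻¹) - ∫ s in dbTail T t, u s := by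
  have hφc' : ContinuousOn φ (Ioi 0) := hφc.mono Ioi_subset_Ici_self
  have hlin : ∀ x, δ ≤ x → φ x ≤ (a + b / δ + 1) * x := fun x hx ↦ by
    have : b ≤ b / δ * x := by rw [div_mul_eq_mul_div, le_div_iff₀ hδ]; nlinarith
    nlinarith [hφgrowth x (hδ.le.trans hx)]
  obtain ⟨y, hy⟩ := exists_isBoundedSolution hu0 huInt hφc' hφpos hδ (by positivity) hlin
  have hG {y'} (hy' : IsBoundedSolution T u φ δ y') {t} (ht : t ∈ dbInterval T) :
      δ ≤ y' t ∧ integralInv φ δ (y' t) = ∫ s in dbTail T t, u s :=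
    ⟨hy'.le_apply hu0 hφ0 hδ ht, hy'.integralInv_eq hu0 huInt hφc' hφ0 hφpos ha hφgrowth hδ ht⟩
  refine ⟨y, hy, fun y' hy' t ht ↦ ?_, fun t ht ↦ ⟨(hG hy ht).1, ?_⟩⟩
  · exact (integralInv_strictMonoOn hφc' hφpos hδ).injOn (hδ.trans_le (hG hy' ht).1)
      (hδ.trans_le (hG hy ht).1) ((hG hy' ht).2.trans (hG hy ht).2.symm)
  · rw [← (hG hy ht).2, integralInv, intervalIntegral.integral_interval_sub_left
      (intervalIntegrable_inv_of_pos hφc' hφpos hδ one_pos)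
      (intervalIntegrable_inv_of_pos hφc' hφpos hδ (hδ.trans_le (hG hy ht).1))]

theorem stmt_9 (T : ℝ≥0∞) (hT : 0 < T) (u : ℝ → ℝ) (φ : ℝ → ℝ) (a b : ℝ)
    (hu0 : ∀ t ∈ dbInterval T, 0 ≤ u t)
    (huInt : IntegrableOn u (dbInterval T))
    (hφc : ContinuousOn φ (Set.Ici 0))
    (hφ0 : ∀ x : ℝ, 0 ≤ x → 0 ≤ φ x)
    (hφpos : ∀ x : ℝ, 0 < x → 0 < φ x)
    (ha : 0 ≤ a) (hb : 0 ≤ b)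
    (hφgrowth : ∀ x : ℝ, 0 ≤ x → φ x ≤ a * x + b)
    (δ : ℝ) (hδ : 0 < δ) :
    ∃ y : ℝ → ℝ,
      (ContinuousOn y (dbInterval T) ∧ (∃ M : ℝ, ∀ t ∈ dbInterval T, |y t| ≤ M) ∧
        ∀ t ∈ dbInterval T, y t = δ + ∫ s in dbTail T t, u s * φ (y s)) ∧
      (∀ y' : ℝ → ℝ,
        (ContinuousOn y' (dbInterval T) ∧ (∃ M : ℝ, ∀ t ∈ dbInterval T, |y' t| ≤ M) ∧
          ∀ t ∈ dbInterval T, y' t = δ + ∫ s in dbTail T t, u s * φ (y' s)) →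
        ∀ t ∈ dbInterval T, y' t = y t) ∧
      -- explicit representation: y t = G⁻¹(G(δ) − ∫ₜᵀ u), with G(z) = ∫_z^1 dx/φ(x)
      ∀ t ∈ dbInterval T, δ ≤ y t ∧
        (∫ x in (y t)..1, (φ x)⁻¹) = (∫ x in δ..1, (φ x)⁻¹) - ∫ s in dbTail T t, u s :=
  stmt_9_general T u φ a b hu0 huInt hφc hφ0 hφpos ha hb hφgrowth δ hδ
end

section
/- Lower bound and convergence rate of the inf-convolution approximation: in the setting of the previous statement, with gⁿ(t,y) = inf_p { g(t,p) + (n+A) u(t)|p−y| }, the infimum can be restricted to the set where u(t)|p−y| ≤ (2A/n) u(t), and consequently 0 ≤ g(t,y) − gⁿ(t,y) ≤ u(t) ρ(2A/n) for all t and y. In particular if ∫₀ᵀ u(t) dt < ∞ then ∫₀ᵀ sup_y |g(t,y) − gⁿ(t,y)| dt ≤ ρ(2A/n) ∫₀ᵀ u(t) dt → 0 as n → ∞. -/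
/-!
Write `f = g t`, `c = u t` and `δ = 2A/n`. For `|p - y| ≤ δ` the modulus of continuity gives
`f y ≤ f p + c ρ(δ)`, while for `|p - y| > δ` the linear growth `ρ x ≤ A (1 + x)` gives
`f y ≤ f p + (n + A) c |p - y|`: far points never beat the candidate `p = y`. Hence the infimum
may be taken over `|p - y| ≤ δ`, and it lies between `f y - c ρ(δ)` and `f y`. The rate `ρ(2A/n) → 0`
is continuity of `ρ` at `0`.
-/

open MeasureTheory Filter
open scoped ENNReal

open Set Topology

/-- The inf-convolution `gⁿ` of the paper, with `L = (n + A) u(t)`. -/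
noncomputable def infConv (f : ℝ → ℝ) (L y : ℝ) : ℝ := ⨅ p, f p + L * |p - y|

section InfConv

variable {f : ℝ → ℝ} {L δ ε y : ℝ}

theorem sub_le_add_mul_abs_of_near_of_far (hε : 0 ≤ ε) (hL : 0 ≤ L)
    (hnear : ∀ p, |p - y| ≤ δ → f y ≤ f p + ε)
    (hfar : ∀ p, δ < |p - y| → f y ≤ f p + L * |p - y|) (p : ℝ) :
    f y - ε ≤ f p + L * |p - y| := by
  rcases le_or_gt |p - y| δ with hp | hp
  · linarith [hnear p hp, mul_nonneg hL (abs_nonneg (p - y))]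
  · linarith [hfar p hp]

theorem bddBelow_range_add_mul_abs (hε : 0 ≤ ε) (hL : 0 ≤ L)
    (hnear : ∀ p, |p - y| ≤ δ → f y ≤ f p + ε)
    (hfar : ∀ p, δ < |p - y| → f y ≤ f p + L * |p - y|) :
    BddBelow (range fun p => f p + L * |p - y|) :=
  ⟨f y - ε, forall_mem_range.2 (sub_le_add_mul_abs_of_near_of_far hε hL hnear hfar)⟩

theorem infConv_le_self (hbdd : BddBelow (range fun p => f p + L * |p - y|)) :
    infConv f L y ≤ f y := by
  simpa [infConv] using ciInf_le hbdd y

theorem sub_le_infConv (hε : 0 ≤ ε) (hL : 0 ≤ L)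
    (hnear : ∀ p, |p - y| ≤ δ → f y ≤ f p + ε)
    (hfar : ∀ p, δ < |p - y| → f y ≤ f p + L * |p - y|) :
    f y - ε ≤ infConv f L y :=
  le_ciInf (sub_le_add_mul_abs_of_near_of_far hε hL hnear hfar)

theorem infConv_eq_iInf_abs_sub_le (hδ : 0 ≤ δ)
    (hbdd : BddBelow (range fun p => f p + L * |p - y|))
    (hfar : ∀ p, δ < |p - y| → f y ≤ f p + L * |p - y|) :
    infConv f L y = ⨅ p : {p : ℝ // |p - y| ≤ δ}, f p + L * |(p : ℝ) - y| := by
  have hy : |y - y| ≤ δ := by simpa using hδ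
  have : Nonempty {p : ℝ // |p - y| ≤ δ} := ⟨⟨y, hy⟩⟩
  have hbdd' : BddBelow (range fun p : {p : ℝ // |p - y| ≤ δ} => f p + L * |(p : ℝ) - y|) :=
    hbdd.mono <| by rintro _ ⟨p, rfl⟩; exact ⟨p, rfl⟩
  refine le_antisymm (le_ciInf fun p => ciInf_le hbdd p.1) (le_ciInf fun p => ?_)
  rcases le_or_gt |p - y| δ with hp | hp
  · exact ciInf_le hbdd' ⟨p, hp⟩
  · calc (⨅ q : {q : ℝ // |q - y| ≤ δ}, f q + L * |(q : ℝ) - y|)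
        ≤ f y + L * |y - y| := ciInf_le hbdd' ⟨y, hy⟩
      _ = f y := by simp
      _ ≤ f p + L * |p - y| := hfar p hp

end InfConv

section Modulus

variable {f : ℝ → ℝ} {ρ : ℝ → ℝ} {c : ℝ}

theorem le_add_mul_of_abs_sub_le (hc : 0 ≤ c) (hf : ∀ y₁ y₂, |f y₁ - f y₂| ≤ c * ρ |y₁ - y₂|)
    (hρ : MonotoneOn ρ (Ici 0)) {δ y p : ℝ} (hδ : 0 ≤ δ) (hp : |p - y| ≤ δ) :
    f y ≤ f p + c * ρ δ := by
  have hyp := (abs_le.1 (hf y p)).2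
  rw [abs_sub_comm] at hyp
  linarith [mul_le_mul_of_nonneg_left (hρ (abs_nonneg (p - y)) hδ hp) hc]

theorem le_add_mul_abs_of_le_mul_abs (hc : 0 ≤ c) (hf : ∀ y₁ y₂, |f y₁ - f y₂| ≤ c * ρ |y₁ - y₂|)
    {A n : ℝ} (hρA : ∀ x, 0 ≤ x → ρ x ≤ A * (1 + x)) {y p : ℝ} (hp : A ≤ n * |p - y|) :
    f y ≤ f p + (n + A) * c * |p - y| := by
  have hyp := (abs_le.1 (hf y p)).2
  rw [abs_sub_comm] at hyp
  have hgrowth := mul_le_mul_of_nonneg_left (hρA _ (abs_nonneg (p - y))) hc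
  nlinarith [mul_le_mul_of_nonneg_left hp hc]

end Modulus

theorem tendsto_comp_div_natCast {ρ : ℝ → ℝ} (hρ : ContinuousWithinAt ρ (Ici 0) 0) {a : ℝ}
    (ha : 0 ≤ a) : Tendsto (fun n : ℕ => ρ (a / n)) atTop (𝓝 (ρ 0)) := by
  refine hρ.tendsto.comp (tendsto_nhdsWithin_iff.2 ⟨?_, ?_⟩)
  · simpa using tendsto_const_nhds.div_atTop tendsto_natCast_atTop_atTop
  · exact Eventually.of_forall fun n => div_nonneg ha n.cast_nonneg

theorem stmt_16_general (T : ℝ≥0∞) (u : ℝ → ℝ) (ρ : ℝ → ℝ) (A : ℝ)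
    (g : ℝ → ℝ → ℝ)
    (hu0 : ∀ t ∈ dbInterval T, 0 < u t)
    (hρc : ContinuousOn ρ (Set.Ici 0))
    (hρmono : MonotoneOn ρ (Set.Ici (0 : ℝ)))
    (hρ0 : ρ 0 = 0) (hρnn : ∀ x : ℝ, 0 ≤ x → 0 ≤ ρ x)
    (hA : 0 < A)
    (hρgrowth : ∀ x : ℝ, 0 ≤ x → ρ x ≤ A * (1 + x))
    (hg : ∀ t ∈ dbInterval T, ∀ y₁ y₂ : ℝ, |g t y₁ - g t y₂| ≤ u t * ρ |y₁ - y₂|) :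
    (∀ n : ℕ, 0 < n → ∀ t ∈ dbInterval T, ∀ y : ℝ,
      (⨅ p : ℝ, g t p + ((n : ℝ) + A) * u t * |p - y|) =
        (⨅ p : {p : ℝ // |p - y| ≤ 2 * A / (n : ℝ)},
          g t (p : ℝ) + ((n : ℝ) + A) * u t * |(p : ℝ) - y|) ∧
      0 ≤ g t y - (⨅ p : ℝ, g t p + ((n : ℝ) + A) * u t * |p - y|) ∧
      g t y - (⨅ p : ℝ, g t p + ((n : ℝ) + A) * u t * |p - y|) ≤
        u t * ρ (2 * A / (n : ℝ))) ∧
    Tendsto (fun n : ℕ => ρ (2 * A / (n : ℝ)) * ∫ t in dbInterval T, u t)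
      atTop (nhds 0) := by
  refine ⟨fun n hn t ht y => ?_, ?_⟩
  · have hut := (hu0 t ht).le
    have hδ : 0 ≤ 2 * A / (n : ℝ) := by positivity
    have hε : 0 ≤ u t * ρ (2 * A / n) := mul_nonneg hut (hρnn _ hδ)
    have hnear := fun p => le_add_mul_of_abs_sub_le (y := y) (p := p) hut (hg t ht) hρmono hδ
    have hfar : ∀ p, 2 * A / n < |p - y| → g t y ≤ g t p + (n + A) * u t * |p - y| := by
      refine fun p hp => le_add_mul_abs_of_le_mul_abs hut (hg t ht) hρgrowth ?_
      have := (div_lt_iff₀' (by exact_mod_cast hn : (0 : ℝ) < n)).1 hp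
      linarith
    have hL : 0 ≤ ((n : ℝ) + A) * u t := by positivity
    have hbdd := bddBelow_range_add_mul_abs hε hL hnear hfar
    exact ⟨infConv_eq_iInf_abs_sub_le hδ hbdd hfar, sub_nonneg.2 (infConv_le_self hbdd),
      sub_le_comm.1 (sub_le_infConv hε hL hnear hfar)⟩
  · simpa [hρ0] using (tendsto_comp_div_natCast (hρc 0 self_mem_Ici) (by positivity)).mul_const
      (∫ t in dbInterval T, u t)

theorem stmt_16 (T : ℝ≥0∞) (hT : 0 < T) (u : ℝ → ℝ) (ρ : ℝ → ℝ) (A : ℝ)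
    (g : ℝ → ℝ → ℝ)
    (hu0 : ∀ t ∈ dbInterval T, 0 < u t)
    (huInt : IntegrableOn u (dbInterval T))
    (hρc : ContinuousOn ρ (Set.Ici 0))
    (hρmono : MonotoneOn ρ (Set.Ici (0 : ℝ)))
    (hρ0 : ρ 0 = 0) (hρnn : ∀ x : ℝ, 0 ≤ x → 0 ≤ ρ x)
    (hA : 0 < A)
    (hρgrowth : ∀ x : ℝ, 0 ≤ x → ρ x ≤ A * (1 + x))
    (hg : ∀ t ∈ dbInterval T, ∀ y₁ y₂ : ℝ, |g t y₁ - g t y₂| ≤ u t * ρ |y₁ - y₂|) :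
    (∀ n : ℕ, 0 < n → ∀ t ∈ dbInterval T, ∀ y : ℝ,
      (⨅ p : ℝ, g t p + ((n : ℝ) + A) * u t * |p - y|) =
        (⨅ p : {p : ℝ // |p - y| ≤ 2 * A / (n : ℝ)},
          g t (p : ℝ) + ((n : ℝ) + A) * u t * |(p : ℝ) - y|) ∧
      0 ≤ g t y - (⨅ p : ℝ, g t p + ((n : ℝ) + A) * u t * |p - y|) ∧
      g t y - (⨅ p : ℝ, g t p + ((n : ℝ) + A) * u t * |p - y|) ≤
        u t * ρ (2 * A / (n : ℝ))) ∧
    Tendsto (fun n : ℕ => ρ (2 * A / (n : ℝ)) * ∫ t in dbInterval T, u t)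
      atTop (nhds 0) :=
  stmt_16_general T u ρ A g hu0 hρc hρmono hρ0 hρnn hA hρgrowth hg
end
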